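/- arXiv:2602.03802 — 4 statements merged into one kernel-verified Lean document; each statement's English description precedes it below -/
import Mathlib

section
/- Let τ_1 ≤ ... ≤ τ_n be positive reals and let m* minimize m ↦ τ_m/m over [n]. Then for every m̄ ∈ [n], the harmonic mean bound holds: ( (1/m̄) ∑_{i=1}^{m̄} 1/τ_i )^{-1} ≥ τ_{m*} · m̄ / (m* · ∑_{i=1}^{m̄} 1/i) ≥ τ_{m*} · m̄ / (m* · (1 + log m̄)). -/
/-!
Minimality of `τ_{m*}/m*` says `τ_i ≥ c i` with `c = τ_{m*}/m*`, so termwise `1/τ_i ≤ c⁻¹ (1/i)`.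
Summing over `i ≤ m̄` bounds the mean of the `1/τ_i` by `c⁻¹ H_{m̄} / m̄`, and inverting gives the
first inequality; the second is `H_{m̄} ≤ 1 + log m̄`.
-/

open Finset

lemma sum_Icc_one_div_natCast_le_one_add_log (m : ℕ) :
    ∑ i ∈ Icc 1 m, (1 : ℝ) / i ≤ 1 + Real.log m := by
  simpa [harmonic_eq_sum_Icc] using harmonic_le_one_add_log m

lemma sum_Icc_one_div_pos {f : ℕ → ℝ} {m : ℕ} (hm : 1 ≤ m) (hf : ∀ i ∈ Icc 1 m, 0 < f i) :
    0 < ∑ i ∈ Icc 1 m, 1 / f i :=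
  sum_pos (fun i hi => one_div_pos.mpr (hf i hi)) ⟨1, mem_Icc.mpr ⟨le_rfl, hm⟩⟩

lemma sum_one_div_le_inv_mul_sum_one_div {ι : Type*} (s : Finset ι) {f g : ι → ℝ} {c : ℝ}
    (hc : 0 < c) (hf : ∀ i ∈ s, 0 < f i) (hfg : ∀ i ∈ s, c * f i ≤ g i) :
    ∑ i ∈ s, 1 / g i ≤ c⁻¹ * ∑ i ∈ s, 1 / f i := by
  rw [mul_sum]
  refine sum_le_sum fun i hi => ?_
  have := hf i hi
  calc 1 / g i ≤ 1 / (c * f i) := one_div_le_one_div_of_le (by positivity) (hfg i hi)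
    _ = c⁻¹ * (1 / f i) := by field_simp

lemma mul_div_harmonic_le_inv_mean_one_div {τ : ℕ → ℝ} {c : ℝ} {m : ℕ} (hc : 0 < c)
    (hm : 1 ≤ m) (hpos : ∀ i ∈ Icc 1 m, 0 < τ i) (hτ : ∀ i ∈ Icc 1 m, c * i ≤ τ i) :
    c * m / ∑ i ∈ Icc 1 m, (1 : ℝ) / i ≤ ((1 / (m : ℝ)) * ∑ i ∈ Icc 1 m, 1 / τ i)⁻¹ := by
  have hidx : ∀ i ∈ Icc 1 m, (0 : ℝ) < i := fun i hi => by
    exact_mod_cast (mem_Icc.mp hi).1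
  have hH := sum_Icc_one_div_pos hm hidx
  have hS := sum_Icc_one_div_pos hm hpos
  have hmR : (0 : ℝ) < m := by exact_mod_cast hm
  calc c * m / ∑ i ∈ Icc 1 m, (1 : ℝ) / i
      = ((1 / (m : ℝ)) * (c⁻¹ * ∑ i ∈ Icc 1 m, (1 : ℝ) / i))⁻¹ := by field_simp
    _ ≤ ((1 / (m : ℝ)) * ∑ i ∈ Icc 1 m, 1 / τ i)⁻¹ := by
      gcongr
      exact sum_one_div_le_inv_mul_sum_one_div _ hc hidx hτ

theorem harmonic_mean_lower_bound_general (n : ℕ) (τ : ℕ → ℝ)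
    (hpos : ∀ i ∈ Finset.Icc 1 n, 0 < τ i)
    (mstar : ℕ) (hmstar : mstar ∈ Finset.Icc 1 n)
    (hmin : ∀ m ∈ Finset.Icc 1 n, τ mstar / (mstar : ℝ) ≤ τ m / (m : ℝ)) :
    ∀ mb ∈ Finset.Icc 1 n,
      τ mstar * (mb : ℝ) / ((mstar : ℝ) * ∑ i ∈ Finset.Icc 1 mb, (1 : ℝ) / i) ≤
        ((1 / (mb : ℝ)) * ∑ i ∈ Finset.Icc 1 mb, 1 / τ i)⁻¹ ∧
      τ mstar * (mb : ℝ) / ((mstar : ℝ) * (1 + Real.log mb)) ≤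
        τ mstar * (mb : ℝ) / ((mstar : ℝ) * ∑ i ∈ Finset.Icc 1 mb, (1 : ℝ) / i) := by
  intro mb hmb
  have hmb1 : 1 ≤ mb := (mem_Icc.mp hmb).1
  have hsub : Icc 1 mb ⊆ Icc 1 n := Icc_subset_Icc_right (mem_Icc.mp hmb).2
  have hms : (0 : ℝ) < mstar := by exact_mod_cast (mem_Icc.mp hmstar).1
  have hc : 0 < τ mstar / mstar := div_pos (hpos _ hmstar) hms
  have hτ : ∀ i ∈ Icc 1 mb, τ mstar / mstar * i ≤ τ i := fun i hi =>
    (le_div_iff₀ (by exact_mod_cast (mem_Icc.mp hi).1)).mp (hmin i (hsub hi))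
  have hH : 0 < ∑ i ∈ Icc 1 mb, (1 : ℝ) / i :=
    sum_Icc_one_div_pos hmb1 fun i hi => by exact_mod_cast (mem_Icc.mp hi).1
  have hregroup : ∀ x : ℝ, τ mstar * mb / (mstar * x) = τ mstar / mstar * mb / x := fun x => by
    ring
  simp only [hregroup]
  exact ⟨mul_div_harmonic_le_inv_mean_one_div hc hmb1 (fun i hi => hpos i (hsub hi)) hτ,
    div_le_div_of_nonneg_left (by positivity) hH
      (sum_Icc_one_div_natCast_le_one_add_log mb)⟩

/-- Harmonic mean bound: for positive nondecreasing `τ` with `m*` minimizing `τ m / m`,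
`((1/m̄) ∑_{i=1}^{m̄} 1/τ_i)⁻¹ ≥ τ_{m*} m̄ / (m* ∑_{i=1}^{m̄} 1/i)
  ≥ τ_{m*} m̄ / (m* (1 + log m̄))`. -/
theorem harmonic_mean_lower_bound (n : ℕ) (hn : 1 ≤ n) (τ : ℕ → ℝ)
    (hpos : ∀ i ∈ Finset.Icc 1 n, 0 < τ i)
    (hmono : ∀ i ∈ Finset.Icc 1 n, ∀ j ∈ Finset.Icc 1 n, i ≤ j → τ i ≤ τ j)
    (mstar : ℕ) (hmstar : mstar ∈ Finset.Icc 1 n)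
    (hmin : ∀ m ∈ Finset.Icc 1 n, τ mstar / (mstar : ℝ) ≤ τ m / (m : ℝ)) :
    ∀ mb ∈ Finset.Icc 1 n,
      τ mstar * (mb : ℝ) / ((mstar : ℝ) * ∑ i ∈ Finset.Icc 1 mb, (1 : ℝ) / i) ≤
        ((1 / (mb : ℝ)) * ∑ i ∈ Finset.Icc 1 mb, 1 / τ i)⁻¹ ∧
      τ mstar * (mb : ℝ) / ((mstar : ℝ) * (1 + Real.log mb)) ≤
        τ mstar * (mb : ℝ) / ((mstar : ℝ) * ∑ i ∈ Finset.Icc 1 mb, (1 : ℝ) / i) :=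
  harmonic_mean_lower_bound_general n τ hpos mstar hmstar hmin
end

section
/- Let τ_1 ≤ ... ≤ τ_n be positive reals, and define T_sync = min_{m ∈ [n]} [ τ_m · max{A, B/m} ] and T_opt = min_{m ∈ [n]} [ ( (1/m) ∑_{i=1}^m 1/τ_i )^{-1} · max{A, B/m} ] for positive constants A, B with B ≥ A·n. Then T_sync ≤ C · log(n+1) · T_opt for some universal constant C. -/
/-!
When `B ≥ A n`, every term has `max A (B/m) = B/m`. Writing `L = T_sync`, minimality gives
`L ≤ τ_i B / i`, i.e. `1/τ_i ≤ B/(L i)`, for every `i`. Summing, `∑_{i ≤ m} 1/τ_i ≤ (B/L) H_m`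
with `H_m ≤ 2 log (n+1)`, so each term `B / ∑_{i ≤ m} 1/τ_i` of `T_opt` is at least
`L / (2 log (n+1))`.
-/

open Finset Real

lemma harmonic_le_two_mul_log_add_one (m : ℕ) : (harmonic m : ℝ) ≤ 2 * log (m + 1) := by
  induction m with
  | zero => simp
  | succ m ih =>
    have step : ((m : ℝ) + 1)⁻¹ ≤ 2 * (log (m + 2) - log (m + 1)) := by
      have h := one_sub_inv_le_log_of_pos (x := ((m : ℝ) + 2) / (m + 1)) (by positivity)
      rw [log_div (by positivity) (by positivity), inv_div] at h
      have h' : ((m : ℝ) + 1)⁻¹ ≤ 2 * (1 - (m + 1) / (m + 2)) := by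
        rw [inv_eq_one_div, div_le_iff₀ (by positivity)]
        field_simp
        linarith
      linarith
    push_cast [harmonic_succ]
    rw [show (m : ℝ) + 1 + 1 = m + 2 by ring]
    linarith

lemma mul_sum_inv_le_mul_harmonic {τ : ℕ → ℝ} {L B : ℝ} {m : ℕ}
    (hτ : ∀ i ∈ Icc 1 m, 0 < τ i) (hL : ∀ i ∈ Icc 1 m, L ≤ τ i * (B / i)) :
    L * ∑ i ∈ Icc 1 m, 1 / τ i ≤ B * harmonic m := by
  rw [harmonic_eq_sum_Icc]
  push_cast
  rw [mul_sum, mul_sum]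
  refine sum_le_sum fun i hi => ?_
  rw [mul_one_div, div_le_iff₀ (hτ i hi), ← div_eq_mul_inv, mul_comm]
  exact hL i hi

lemma le_two_mul_log_mul_div_sum_inv {τ : ℕ → ℝ} {L B : ℝ} {m n : ℕ} (hB : 0 ≤ B)
    (hm : 1 ≤ m) (hmn : m ≤ n) (hτ : ∀ i ∈ Icc 1 m, 0 < τ i)
    (hL : ∀ i ∈ Icc 1 m, L ≤ τ i * (B / i)) :
    L ≤ 2 * log (n + 1) * (B / ∑ i ∈ Icc 1 m, 1 / τ i) := by
  have hS : 0 < ∑ i ∈ Icc 1 m, 1 / τ i :=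
    sum_pos (fun i hi => one_div_pos.mpr (hτ i hi)) (nonempty_Icc.mpr hm)
  have hH : (harmonic m : ℝ) ≤ 2 * log (n + 1) :=
    (harmonic_le_two_mul_log_add_one m).trans (by gcongr)
  rw [mul_div_assoc', le_div_iff₀ hS]
  calc L * ∑ i ∈ Icc 1 m, 1 / τ i ≤ B * harmonic m := mul_sum_inv_le_mul_harmonic hτ hL
    _ ≤ B * (2 * log (n + 1)) := by gcongr
    _ = 2 * log (n + 1) * B := mul_comm _ _

lemma inv_one_div_mul_mul_div {x : ℝ} (hx : x ≠ 0) (S B : ℝ) :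
    ((1 / x) * S)⁻¹ * (B / x) = B / S := by
  rw [one_div_mul_eq_div, inv_div, div_mul_div_comm, mul_comm x B, mul_div_mul_right _ _ hx]

/-- In the high-noise regime `B ≥ A n`, the synchronous time complexity
`T_sync = min_m τ_m max{A, B/m}` is within a universal constant times `log (n+1)` of the
optimal asynchronous time complexity
`T_opt = min_m ((1/m) ∑_{i≤m} 1/τ_i)⁻¹ max{A, B/m}`. -/
theorem sync_near_optimal :
    ∃ C : ℝ, 0 < C ∧
      ∀ (n : ℕ) (hn : 1 ≤ n) (τ : ℕ → ℝ),
        (∀ i ∈ Finset.Icc 1 n, 0 < τ i) →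
        (∀ i ∈ Finset.Icc 1 n, ∀ j ∈ Finset.Icc 1 n, i ≤ j → τ i ≤ τ j) →
        ∀ A B : ℝ, 0 < A → 0 < B → A * (n : ℝ) ≤ B →
          (Finset.Icc 1 n).inf' (Finset.nonempty_Icc.mpr hn)
              (fun m => τ m * max A (B / (m : ℝ))) ≤
            C * Real.log ((n : ℝ) + 1) *
              (Finset.Icc 1 n).inf' (Finset.nonempty_Icc.mpr hn)
                (fun m => ((1 / (m : ℝ)) * ∑ i ∈ Finset.Icc 1 m, 1 / τ i)⁻¹ *
                  max A (B / (m : ℝ))) := by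
  refine ⟨2, two_pos, fun n hn τ hτ _ A B hA hB hAB => ?_⟩
  have hmax : ∀ m ∈ Icc 1 n, max A (B / m) = B / m := by
    intro m hm
    obtain ⟨hm1, hmn⟩ := mem_Icc.mp hm
    have hmn' : (m : ℝ) ≤ n := by exact_mod_cast hmn
    refine max_eq_right ((le_div_iff₀ (by positivity)).2 ?_)
    nlinarith
  obtain ⟨m, hm, hmin⟩ := exists_mem_eq_inf' (nonempty_Icc.mpr hn)
    fun m => ((1 / (m : ℝ)) * ∑ i ∈ Icc 1 m, 1 / τ i)⁻¹ * max A (B / m)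
  obtain ⟨hm1, hmn⟩ := mem_Icc.mp hm
  rw [hmin, hmax m hm, inv_one_div_mul_mul_div (by positivity)]
  refine le_two_mul_log_mul_div_sum_inv hB.le hm1 hmn
    (fun i hi => hτ i (Icc_subset_Icc_right hmn hi)) fun i hi => ?_
  have hi' := Icc_subset_Icc_right hmn hi
  rw [← hmax i hi']
  exact inf'_le _ hi'
end

section
/- Let v > 0 and p ∈ [0, 1). Suppose functions v_i : ℝ_+ → ℝ_+ (i = 1,...,n) satisfy: for every t, v_i(t) ≤ v for all i, and ∑_{i=1}^n v_i(t) ≥ (1−p) n v. Then for any interval [t₀, t], the number n̄ of indices i with ∫_{t₀}^{t} v_i ≤ (1/2)(t − t₀) v satisfies n̄ ≤ 2pn; hence at least (1 − 2p)n workers satisfy ∫_{t₀}^{t} v_i ≥ (1/2)(t − t₀)v. -/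
/-!
Write `T = t - t₀`. Each worker accumulates at most `T v`, while together they accumulate at
least `(1 - p) n T v`, so the total shortfall `∑ (T v - ∫ vᵢ)` is at most `p n T v`.
A worker with `∫ vᵢ ≤ T v / 2` has shortfall at least `T v / 2`, hence there are at most
`2 p n` of them (a Markov inequality for the shortfalls); every other worker has
`∫ vᵢ ≥ T v / 2`.
-/

open MeasureTheory

namespace Finset

variable {ι : Type*}

theorem card_filter_le_mul_sub_le (s : Finset ι) (x : ι → ℝ) {M θ q : ℝ}
    (hx : ∀ i ∈ s, x i ≤ M) (hsum : (1 - q) * #s * M ≤ ∑ i ∈ s, x i) :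
    #(s.filter (x · ≤ θ)) * (M - θ) ≤ q * #s * M := by
  calc #(s.filter (x · ≤ θ)) * (M - θ)
      = ∑ i ∈ s.filter (x · ≤ θ), (M - θ) := by rw [sum_const, nsmul_eq_mul]
    _ ≤ ∑ i ∈ s.filter (x · ≤ θ), (M - x i) :=
        sum_le_sum fun i hi => by linarith [(mem_filter.mp hi).2]
    _ ≤ ∑ i ∈ s, (M - x i) :=
        sum_le_sum_of_subset_of_nonneg (filter_subset _ _) fun i hi _ => by linarith [hx i hi]
    _ = #s * M - ∑ i ∈ s, x i := by rw [sum_sub_distrib, sum_const, nsmul_eq_mul]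
    _ ≤ q * #s * M := by linarith

theorem card_le_card_filter_le_add_card_filter_ge (s : Finset ι) (x : ι → ℝ) (θ : ℝ) :
    #s ≤ #(s.filter (x · ≤ θ)) + #(s.filter (θ ≤ x ·)) := by
  classical
  calc #s ≤ #(s.filter (x · ≤ θ) ∪ s.filter (θ ≤ x ·)) :=
        card_le_card fun i hi => by
          rcases le_total (x i) θ with h | h <;> simp [hi, h]
    _ ≤ _ := card_union_le _ _

end Finset

namespace intervalIntegral

variable {a b c : ℝ}

theorem integral_le_mul_of_le_const {f : ℝ → ℝ} (hab : a ≤ b)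
    (hf : IntervalIntegrable f volume a b) (hc : ∀ x ∈ Set.Icc a b, f x ≤ c) :
    ∫ x in a..b, f x ≤ (b - a) * c := by
  simpa only [integral_const, smul_eq_mul] using
    integral_mono_on hab hf intervalIntegrable_const hc

theorem mul_le_sum_integral_of_le_sum {ι : Type*} {s : Finset ι} {f : ι → ℝ → ℝ}
    (hab : a ≤ b) (hf : ∀ i ∈ s, IntervalIntegrable (f i) volume a b)
    (hc : ∀ x ∈ Set.Icc a b, c ≤ ∑ i ∈ s, f i x) :
    (b - a) * c ≤ ∑ i ∈ s, ∫ x in a..b, f i x := by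
  have hsum : IntervalIntegrable (fun x => ∑ i ∈ s, f i x) volume a b := by
    simpa only [Finset.sum_fn] using IntervalIntegrable.sum s hf
  rw [← integral_finsetSum hf]
  simpa only [integral_const, smul_eq_mul] using
    integral_mono_on hab intervalIntegrable_const hsum hc

end intervalIntegral

theorem partial_participation_count_general (n : ℕ) (p vc : ℝ)
    (hv : 0 < vc)
    (v : ℕ → ℝ → ℝ)
    (hle : ∀ i ∈ Finset.Icc 1 n, ∀ t : ℝ, v i t ≤ vc)
    (hsum : ∀ t : ℝ, (1 - p) * (n : ℝ) * vc ≤ ∑ i ∈ Finset.Icc 1 n, v i t)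
    (hint : ∀ i ∈ Finset.Icc 1 n, ∀ a b : ℝ, IntervalIntegrable (v i) volume a b)
    (t0 t : ℝ) (ht : t0 < t) :
    (((Finset.Icc 1 n).filter
        (fun i => (∫ s in t0..t, v i s) ≤ (1 / 2) * (t - t0) * vc)).card : ℝ) ≤
      2 * p * (n : ℝ) ∧
    (1 - 2 * p) * (n : ℝ) ≤
      (((Finset.Icc 1 n).filter
        (fun i => (1 / 2) * (t - t0) * vc ≤ ∫ s in t0..t, v i s)).card : ℝ) := by
  set work := fun i => ∫ s in t0..t, v i s
  have hcard : (Finset.Icc 1 n).card = n := by simp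
  have hwork_le : ∀ i ∈ Finset.Icc 1 n, work i ≤ (t - t0) * vc := fun i hi =>
    intervalIntegral.integral_le_mul_of_le_const ht.le (hint i hi t0 t) fun s _ => hle i hi s
  have htotal : (1 - p) * (Finset.Icc 1 n).card * ((t - t0) * vc) ≤
      ∑ i ∈ Finset.Icc 1 n, work i := by
    rw [hcard]
    calc (1 - p) * n * ((t - t0) * vc) = (t - t0) * ((1 - p) * n * vc) := by ring
      _ ≤ _ := intervalIntegral.mul_le_sum_integral_of_le_sum ht.le (fun i hi => hint i hi t0 t)
          fun s _ => hsum s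
  set θ := 1 / 2 * (t - t0) * vc
  have hmarkov := Finset.card_filter_le_mul_sub_le _ work (θ := θ) hwork_le htotal
  have hsplit := Finset.card_le_card_filter_le_add_card_filter_ge (Finset.Icc 1 n) work θ
  rw [hcard] at hmarkov hsplit
  have hTv : 0 < (t - t0) * vc := mul_pos (sub_pos.mpr ht) hv
  have hfew : (((Finset.Icc 1 n).filter (work · ≤ θ)).card : ℝ) ≤ 2 * p * n := by
    rw [show (t - t0) * vc - θ = (t - t0) * vc / 2 by simp only [θ]; ring] at hmarkov
    exact le_of_mul_le_mul_right (by linarith) hTv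
  refine ⟨hfew, ?_⟩
  have hsplit_real : (n : ℝ) ≤ ((Finset.Icc 1 n).filter (work · ≤ θ)).card +
      ((Finset.Icc 1 n).filter (θ ≤ work ·)).card := by exact_mod_cast hsplit
  linarith

/-- Partial participation counting: if each `v_i ≤ v` pointwise and
`∑ v_i(t) ≥ (1−p) n v` for all `t`, then on any interval `[t₀, t]` the number of workers
accumulating at most half of the full work `(1/2)(t − t₀)v` is at most `2pn`; hence at
least `(1 − 2p)n` workers accumulate at least `(1/2)(t − t₀)v`. -/
theorem partial_participation_count (n : ℕ) (p vc : ℝ)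
    (hp0 : 0 ≤ p) (hp1 : p < 1) (hv : 0 < vc)
    (v : ℕ → ℝ → ℝ)
    (hnn : ∀ i ∈ Finset.Icc 1 n, ∀ t : ℝ, 0 ≤ v i t)
    (hle : ∀ i ∈ Finset.Icc 1 n, ∀ t : ℝ, v i t ≤ vc)
    (hsum : ∀ t : ℝ, (1 - p) * (n : ℝ) * vc ≤ ∑ i ∈ Finset.Icc 1 n, v i t)
    (hint : ∀ i ∈ Finset.Icc 1 n, ∀ a b : ℝ, IntervalIntegrable (v i) volume a b)
    (t0 t : ℝ) (ht : t0 < t) :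
    (((Finset.Icc 1 n).filter
        (fun i => (∫ s in t0..t, v i s) ≤ (1 / 2) * (t - t0) * vc)).card : ℝ) ≤
      2 * p * (n : ℝ) ∧
    (1 - 2 * p) * (n : ℝ) ≤
      (((Finset.Icc 1 n).filter
        (fun i => (1 / 2) * (t - t0) * vc ≤ ∫ s in t0..t, v i s)).card : ℝ) :=
  partial_participation_count_general n p vc hv v hle hsum hint t0 t ht
end

section
/- Under the partial participation setup (each v_i ≤ v pointwise, ∑_i v_i(t) ≥ (1−p)nv for all t, p < 0.4), the m-Synchronous recursion t̄_{k+1} = min{ t : max_{|S|=m} min_{i∈S} ⌊∫_{t̄_k}^t v_i⌋ = 2 } with m ≤ ⌊(1−2p)n⌋ satisfies t̄_{k+1} ≤ t̄_k + 4/v, and hence t̄_K ≤ 4K/v. -/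
/-!
Write `g i t = ∫_a^t v_i` for the work of worker `i` since `a = t̄_k`, and `G t` for the `m`-th
largest of the `g i t`, i.e. the max over `m`-subsets of the min over the subset. `G` is continuous
with `G a = 0`, and `⌊·⌋` commutes with max–min, so the stopping condition at `t` reads
`⌊G t⌋ = 2`. On `[a, a + 4/v]` each worker does at most `4` units of work while all of them
together do at least `4(1-p)n`, so at least `(1-2p)n ≥ m` workers reach `2`. Thus
`G (a + 4/v) ≥ 2`, and the intermediate value theorem gives a stopping time `≤ a + 4/v`.
-/

open MeasureTheory
open Finset

variable {ι : Type*}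

namespace Finset

/-- For `𝒮 = s.powersetCard m` this is the `m`-th largest value of `f` on `s`; the `0` is a junk
value for empty members of `𝒮`. -/
noncomputable def maxMin (𝒮 : Finset (Finset ι)) (h𝒮 : 𝒮.Nonempty) (f : ι → ℝ) : ℝ :=
  𝒮.sup' h𝒮 fun S => if hS : S.Nonempty then S.inf' hS f else 0

theorem maxMin_zero (𝒮 : Finset (Finset ι)) (h𝒮 : 𝒮.Nonempty) : 𝒮.maxMin h𝒮 (fun _ => 0) = 0 := by
  simp only [maxMin, inf'_const, dite_eq_ite, ite_self, sup'_const]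

theorem le_maxMin {𝒮 : Finset (Finset ι)} (h𝒮 : 𝒮.Nonempty) {f : ι → ℝ} {S : Finset ι} (hS𝒮 : S ∈ 𝒮)
    (hS : S.Nonempty) {c : ℝ} (hc : ∀ i ∈ S, c ≤ f i) : c ≤ 𝒮.maxMin h𝒮 f :=
  le_sup'_of_le _ hS𝒮 <| by simpa only [dif_pos hS] using le_inf' hS f hc

theorem continuous_maxMin {𝒮 : Finset (Finset ι)} (h𝒮 : 𝒮.Nonempty) {g : ι → ℝ → ℝ}
    (hg : ∀ S ∈ 𝒮, ∀ i ∈ S, Continuous (g i)) : Continuous fun t => 𝒮.maxMin h𝒮 (g · t) := by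
  refine Continuous.finset_sup'_apply h𝒮 fun S hS => ?_
  by_cases hne : S.Nonempty
  · simpa only [dif_pos hne] using Continuous.finset_inf'_apply hne (hg S hS)
  · simpa only [dif_neg hne] using continuous_const

theorem sum_le_mul_card_filter_add (s : Finset ι) (x : ι → ℝ) {b : ℝ} (hb : ∀ i ∈ s, x i ≤ b)
    (c : ℝ) : ∑ i ∈ s, x i ≤ b * #{i ∈ s | c ≤ x i} + c * #{i ∈ s | ¬c ≤ x i} := by
  rw [← sum_filter_add_sum_filter_not s (c ≤ x ·), mul_comm b, mul_comm c, ← nsmul_eq_mul,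
    ← nsmul_eq_mul]
  exact add_le_add (sum_le_card_nsmul _ _ _ fun i hi => hb i (mem_filter.1 hi).1)
    (sum_le_card_nsmul _ _ _ fun i hi => (not_le.1 (mem_filter.1 hi).2).le)

end Finset

theorem Monotone.map_maxMin {β : Type*} [LinearOrder β] [OrderBot β] [OrderTop β] {φ : ℝ → β}
    (hφ : Monotone φ) {𝒮 : Finset (Finset ι)} (h𝒮 : 𝒮.Nonempty) (hS : ∀ S ∈ 𝒮, S.Nonempty)
    (f : ι → ℝ) : φ (𝒮.maxMin h𝒮 f) = 𝒮.sup fun S => S.inf fun i => φ (f i) := by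
  rw [maxMin, apply_sup'_eq_sup'_comp h𝒮 φ hφ.map_sup, sup'_eq_sup]
  refine sup_congr rfl fun S hS𝒮 => ?_
  rw [Function.comp_apply, dif_pos (hS S hS𝒮), apply_inf'_eq_inf'_comp _ φ hφ.map_inf, inf'_eq_inf]
  rfl

theorem sInf_le_of_le_maxMin {𝒮 : Finset (Finset ι)} (h𝒮 : 𝒮.Nonempty) (hS : ∀ S ∈ 𝒮, S.Nonempty)
    {g : ι → ℝ → ℝ} (hg : ∀ S ∈ 𝒮, ∀ i ∈ S, Continuous (g i)) {a T : ℝ} (haT : a ≤ T) {k : ℕ}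
    (ha : 𝒮.maxMin h𝒮 (g · a) ≤ k) (hT : k ≤ 𝒮.maxMin h𝒮 (g · T)) :
    sInf {t | a ≤ t ∧ 𝒮.sup (fun S => S.inf fun i => (⌊g i t⌋₊ : ℕ∞)) = k} ≤ T := by
  obtain ⟨t, ⟨hat, htT⟩, hGt : 𝒮.maxMin h𝒮 (g · t) = k⟩ :=
    intermediate_value_Icc haT (continuous_maxMin h𝒮 hg).continuousOn ⟨ha, hT⟩
  have hφ : Monotone fun x : ℝ => (⌊x⌋₊ : ℕ∞) := Nat.mono_cast.comp Nat.floor_mono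
  have hlevel : 𝒮.sup (fun S => S.inf fun i => (⌊g i t⌋₊ : ℕ∞)) = k := by
    simpa only [hGt, Nat.floor_natCast] using (hφ.map_maxMin h𝒮 hS (g · t)).symm
  refine (csInf_le ?_ ?_).trans htT
  exacts [⟨a, fun _ h => h.1⟩, ⟨hat, hlevel⟩]

theorem intervalIntegral.integral_le_mul_sub {f : ℝ → ℝ} {a b C : ℝ} (hab : a ≤ b)
    (hf : IntervalIntegrable f volume a b) (hC : ∀ x, f x ≤ C) :
    ∫ x in a..b, f x ≤ C * (b - a) := by
  simpa [mul_comm] using integral_mono_on hab hf intervalIntegrable_const fun x _ => hC x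

theorem intervalIntegral.mul_sub_le_integral {f : ℝ → ℝ} {a b C : ℝ} (hab : a ≤ b)
    (hf : IntervalIntegrable f volume a b) (hC : ∀ x, C ≤ f x) :
    C * (b - a) ≤ ∫ x in a..b, f x := by
  simpa [mul_comm] using integral_mono_on hab intervalIntegrable_const hf fun x _ => hC x

theorem le_card_filter_half_le_integral (s : Finset ι) {p vc a b : ℝ} (hv : 0 < vc) (hab : a < b)
    {v : ι → ℝ → ℝ} (hle : ∀ i ∈ s, ∀ t, v i t ≤ vc)
    (hsum : ∀ t, (1 - p) * #s * vc ≤ ∑ i ∈ s, v i t)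
    (hint : ∀ i ∈ s, IntervalIntegrable (v i) volume a b) :
    (1 - 2 * p) * #s ≤ #{i ∈ s | (b - a) * vc / 2 ≤ ∫ t in a..b, v i t} := by
  set work := fun i => ∫ t in a..b, v i t
  set L := (b - a) * vc
  have hwork_le : ∀ i ∈ s, work i ≤ L := fun i hi => by
    simpa [L, mul_comm] using intervalIntegral.integral_le_mul_sub hab.le (hint i hi) (hle i hi)
  have hsum_work : (1 - p) * #s * L ≤ ∑ i ∈ s, work i := by
    have hint_sum : IntervalIntegrable (fun t => ∑ i ∈ s, v i t) volume a b := by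
      simpa only [Finset.sum_fn] using IntervalIntegrable.sum s hint
    calc (1 - p) * #s * L = (1 - p) * #s * vc * (b - a) := by ring
      _ ≤ ∫ t in a..b, ∑ i ∈ s, v i t := intervalIntegral.mul_sub_le_integral hab.le hint_sum hsum
      _ = ∑ i ∈ s, work i := intervalIntegral.integral_finsetSum hint
  have hcount := sum_le_mul_card_filter_add s work hwork_le (L / 2)
  have hcard : (#{i ∈ s | ¬L / 2 ≤ work i} : ℝ) = #s - #{i ∈ s | L / 2 ≤ work i} := by
    rw [eq_sub_iff_add_eq, add_comm]; exact_mod_cast card_filter_add_card_filter_not _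
  rw [hcard] at hcount
  have hL : 0 < L := mul_pos (sub_pos.2 hab) hv
  refine le_of_mul_le_mul_left ?_ hL
  linarith

theorem sInf_mSync_le (s : Finset ι) {m : ℕ} {p vc : ℝ} (hv : 0 < vc) {v : ι → ℝ → ℝ}
    (hle : ∀ i ∈ s, ∀ t, v i t ≤ vc) (hsum : ∀ t, (1 - p) * #s * vc ≤ ∑ i ∈ s, v i t)
    (hint : ∀ i ∈ s, ∀ a b : ℝ, IntervalIntegrable (v i) volume a b)
    (hm1 : 1 ≤ m) (hm : (m : ℝ) ≤ (1 - 2 * p) * #s) (a : ℝ) :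
    sInf {t | a ≤ t ∧ (s.powerset.filter (fun S => S.card = m)).sup
      (fun S => S.inf fun i => (⌊∫ u in a..t, v i u⌋₊ : ℕ∞)) = 2} ≤ a + 4 / vc := by
  set T := a + 4 / vc
  have haT : a < T := lt_add_of_pos_right a (by positivity)
  have hcrossed := le_card_filter_half_le_integral s hv haT hle hsum fun i hi => hint i hi a T
  rw [show (T - a) * vc / 2 = 2 by rw [add_sub_cancel_left, div_mul_cancel₀ 4 hv.ne']; norm_num]
    at hcrossed
  obtain ⟨S, hSA, hSm⟩ := exists_subset_card_eq (show m ≤ #{i ∈ s | 2 ≤ ∫ u in a..T, v i u} by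
    exact_mod_cast hm.trans hcrossed)
  set 𝒮 := s.powerset.filter (fun S => S.card = m)
  have hS : S ∈ 𝒮 := mem_filter.2 ⟨mem_powerset.2 (hSA.trans (filter_subset _ _)), hSm⟩
  have h𝒮 : 𝒮.Nonempty := ⟨S, hS⟩
  have hne : ∀ S ∈ 𝒮, S.Nonempty := fun S hS => card_pos.1 (((mem_filter.1 hS).2).symm ▸ hm1)
  refine sInf_le_of_le_maxMin h𝒮 hne (k := 2) ?_ haT.le ?_ ?_
  · exact fun S hS i hi =>
      intervalIntegral.continuous_primitive (hint i (mem_powerset.1 (mem_filter.1 hS).1 hi)) a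
  · simp only [intervalIntegral.integral_same, maxMin_zero, Nat.cast_nonneg]
  · exact le_maxMin _ hS (hne S hS) fun i hi => by exact_mod_cast (mem_filter.1 (hSA hi)).2

theorem le_natCast_mul_of_succ_le_add {u : ℕ → ℝ} {c : ℝ} (h0 : u 0 = 0)
    (hstep : ∀ k, u (k + 1) ≤ u k + c) (K : ℕ) : u K ≤ K * c := by
  induction K with
  | zero => simp [h0]
  | succ K ih => push_cast; linarith [hstep K]

theorem msync_partial_participation_general (n m : ℕ) (p vc : ℝ)
    (hv : 0 < vc)
    (v : ℕ → ℝ → ℝ)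
    (hle : ∀ i ∈ Finset.Icc 1 n, ∀ t : ℝ, v i t ≤ vc)
    (hsum : ∀ t : ℝ, (1 - p) * (n : ℝ) * vc ≤ ∑ i ∈ Finset.Icc 1 n, v i t)
    (hint : ∀ i ∈ Finset.Icc 1 n, ∀ a b : ℝ, IntervalIntegrable (v i) volume a b)
    (hm1 : 1 ≤ m) (hm : (m : ℝ) ≤ (1 - 2 * p) * (n : ℝ))
    (tb : ℕ → ℝ) (h0 : tb 0 = 0)
    (hrec : ∀ k : ℕ, tb (k + 1) = sInf {t : ℝ | tb k ≤ t ∧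
      ((Finset.Icc 1 n).powerset.filter (fun S => S.card = m)).sup
        (fun S => S.inf (fun i => (⌊∫ s in tb k..t, v i s⌋₊ : ℕ∞))) = 2}) :
    (∀ k : ℕ, tb (k + 1) ≤ tb k + 4 / vc) ∧
    (∀ K : ℕ, tb K ≤ 4 * (K : ℝ) / vc) := by
  have hcard : (#(Icc 1 n) : ℝ) = n := by simp
  have step : ∀ k, tb (k + 1) ≤ tb k + 4 / vc := fun k => by
    rw [hrec k]
    exact sInf_mSync_le _ hv hle (by rwa [hcard]) hint hm1 (by rwa [hcard]) (tb k)
  exact ⟨step, fun K => (le_natCast_mul_of_succ_le_add h0 step K).trans_eq (by ring)⟩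

/-- Under partial participation (`v_i ≤ v`, `∑ v_i(t) ≥ (1−p)nv`, `p < 0.4`) and
`1 ≤ m ≤ ⌊(1−2p)n⌋`, the `m`-Synchronous recursion
`t̄_{k+1} = min{t : max_{|S|=m} min_{i∈S} ⌊∫_{t̄_k}^t v_i⌋ = 2}` satisfies
`t̄_{k+1} ≤ t̄_k + 4/v`, hence `t̄_K ≤ 4K/v`. -/
theorem msync_partial_participation (n m : ℕ) (p vc : ℝ)
    (hp0 : 0 ≤ p) (hp : p < 0.4) (hv : 0 < vc)
    (v : ℕ → ℝ → ℝ)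
    (hnn : ∀ i ∈ Finset.Icc 1 n, ∀ t : ℝ, 0 ≤ v i t)
    (hle : ∀ i ∈ Finset.Icc 1 n, ∀ t : ℝ, v i t ≤ vc)
    (hsum : ∀ t : ℝ, (1 - p) * (n : ℝ) * vc ≤ ∑ i ∈ Finset.Icc 1 n, v i t)
    (hint : ∀ i ∈ Finset.Icc 1 n, ∀ a b : ℝ, IntervalIntegrable (v i) volume a b)
    (hm1 : 1 ≤ m) (hm : (m : ℝ) ≤ (1 - 2 * p) * (n : ℝ))
    (tb : ℕ → ℝ) (h0 : tb 0 = 0)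
    (hrec : ∀ k : ℕ, tb (k + 1) = sInf {t : ℝ | tb k ≤ t ∧
      ((Finset.Icc 1 n).powerset.filter (fun S => S.card = m)).sup
        (fun S => S.inf (fun i => (⌊∫ s in tb k..t, v i s⌋₊ : ℕ∞))) = 2}) :
    (∀ k : ℕ, tb (k + 1) ≤ tb k + 4 / vc) ∧
    (∀ K : ℕ, tb K ≤ 4 * (K : ℝ) / vc) :=
  msync_partial_participation_general n m p vc hv v hle hsum hint hm1 hm tb h0 hrec
end
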